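/- Let G be a graph, A ⊆ V(G), and suppose the bipartite graph G[A, V(G)\A] has a maximum induced matching of size w (i.e., mim(A) = w). Then for every positive integer d, the number of equivalence classes of ≡^A_{d,1} on subsets of A is at most n^{d·w}, where n = |V(G)|. -/

import Mathlib

/-!
Every class of `≡^A_{d,1}` has an inclusion-minimal member `R`. By minimality each `x ∈ R` has a
witness `v ∉ A` adjacent to `x` with `|N(v) ∩ R| ≤ d`. Repeatedly take `x ∈ R` with the fewest
witnesses and a witness `y` of it, then discard `N(y)` from `R` and `N(x)` from the witnesses:
the chosen pairs form an induced matching of `G[A, V \ A]`, and each costs at most `d` elements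
of `R`, so `|R| ≤ d · w`. For a fixed `a ∉ A`, every set of size at most `k` avoiding `a` is
`range f \ {a}` for some `f : Fin k → V`, which gives at most `n ^ k` classes.
-/

open SimpleGraph

variable {V : Type*} [Fintype V] [DecidableEq V]

/-- The bipartite cut graph `G[A, V \ A]`. -/
def cutGraph (G : SimpleGraph V) (A : Set V) : SimpleGraph V where
  Adj u v := G.Adj u v ∧ ((u ∈ A ∧ v ∉ A) ∨ (u ∉ A ∧ v ∈ A))
  symm := by
    constructor
    intro u v h
    exact ⟨h.1.symm, h.2.elim (fun hx => Or.inr ⟨hx.2, hx.1⟩) (fun hx => Or.inl ⟨hx.2, hx.1⟩)⟩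
  loopless := by constructor; intro v h; exact G.irrefl h.1

/-- An induced matching in `H`. -/
def IsInducedMatching (H : SimpleGraph V) (M : H.Subgraph) : Prop :=
  M.IsMatching ∧ ∀ u v, u ∈ M.verts → v ∈ M.verts → H.Adj u v → M.Adj u v

/-- The (d,1)-neighbor equivalence over `A`, as a setoid on subsets of `A`. -/
def necSetoid (G : SimpleGraph V) (A : Set V) (d : ℕ) : Setoid {S : Set V // S ⊆ A} :=
  ⟨fun B C => ∀ v ∉ A,
      min d (G.neighborSet v ∩ B.1).ncard = min d (G.neighborSet v ∩ C.1).ncard,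
   ⟨fun _ _ _ => rfl,
    fun h v hv => (h v hv).symm,
    fun h1 h2 v hv => (h1 v hv).trans (h2 v hv)⟩⟩

lemma mem_and_ncard_le_of_min_ncard_sdiff_singleton_ne {α : Type*} {T : Set α} {x : α} {d : ℕ}
    (hT : T.Finite) (h : min d (T \ {x}).ncard ≠ min d T.ncard) : x ∈ T ∧ T.ncard ≤ d := by
  by_cases hx : x ∈ T
  · have := Set.ncard_sdiff_singleton_add_one hx hT
    exact ⟨hx, by omega⟩
  · exact absurd (by rw [Set.sdiff_singleton_eq_self hx]) h

lemma exists_range_sdiff_singleton_eq {α : Type*} {a : α} {k : ℕ} {S : Set α} (hS : S.Finite)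
    (ha : a ∉ S) (hk : S.ncard ≤ k) : ∃ f : Fin k → α, Set.range f \ {a} = S := by
  induction k generalizing S with
  | zero => exact ⟨Fin.elim0, by simp_all [Set.ncard_eq_zero hS]⟩
  | succ k ih =>
    rcases S.eq_empty_or_nonempty with rfl | ⟨x, hx⟩
    · exact ⟨fun _ => a, by simp⟩
    obtain ⟨f, hf⟩ := ih hS.sdiff (fun h => ha h.1)
      (by rw [Set.ncard_sdiff_singleton_of_mem hx]; omega)
    refine ⟨Fin.cons x f, ?_⟩
    rw [Fin.range_cons, Set.insert_sdiff_of_notMem _ (by rintro rfl; exact ha hx), hf,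
      Set.insert_sdiff_singleton, Set.insert_eq_of_mem hx]

theorem card_sets_notMem_ncard_le_le_pow {α : Type*} [Finite α] (a : α) (k : ℕ) :
    Nat.card {S : Set α // a ∉ S ∧ S.ncard ≤ k} ≤ Nat.card α ^ k := by
  choose f hf using fun S : {S : Set α // a ∉ S ∧ S.ncard ≤ k} =>
    exists_range_sdiff_singleton_eq S.1.toFinite S.2.1 S.2.2
  calc _ ≤ Nat.card (Fin k → α) :=
        Nat.card_le_card_of_injective f fun S T h => Subtype.ext (by rw [← hf S, ← hf T, h])
    _ = Nat.card α ^ k := by simp [Nat.card_fun]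

section

variable {V : Type*}

lemma cutGraph_univ (G : SimpleGraph V) : cutGraph G Set.univ = ⊥ := by
  ext u v
  simp [cutGraph]

lemma exists_irredundant_subset [Finite V] (G : SimpleGraph V) (A B : Set V) (d : ℕ) :
    ∃ R ⊆ B,
      (∀ v ∉ A, min d (G.neighborSet v ∩ R).ncard = min d (G.neighborSet v ∩ B).ncard) ∧
      ∀ x ∈ R, ∃ v ∉ A, G.Adj v x ∧ (G.neighborSet v ∩ R).ncard ≤ d := by
  obtain ⟨R, hRB, hR⟩ := exists_minimal_le_of_wellFoundedLT
    (fun R => ∀ v ∉ A, min d (G.neighborSet v ∩ R).ncard = min d (G.neighborSet v ∩ B).ncard)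
    B fun _ _ => rfl
  refine ⟨R, hRB, hR.prop, fun x hx => ?_⟩
  obtain ⟨v, hv, hne⟩ : ∃ v ∉ A, min d (G.neighborSet v ∩ (R \ {x})).ncard ≠
      min d (G.neighborSet v ∩ B).ncard := by
    simpa using hR.not_prop_of_lt (Set.sdiff_singleton_ssubset.2 hx)
  rw [← hR.prop v hv, ← Set.inter_sdiff_assoc] at hne
  obtain ⟨hvx, hle⟩ := mem_and_ncard_le_of_min_ncard_sdiff_singleton_ne (Set.toFinite _) hne
  exact ⟨v, hv, hvx.1, hle⟩

namespace SimpleGraph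

variable {G : SimpleGraph V} {M : Set (V × V)} {p q : V × V}

/-- Taking `p = q` gives `x ~ y` for every pair `(x, y)`. When every `x` lies in `A` and every `y`
outside, the pairs are the edges of an induced matching of `cutGraph G A`. -/
def IsInducedPairing (G : SimpleGraph V) (M : Set (V × V)) : Prop :=
  ∀ p ∈ M, ∀ q ∈ M, G.Adj p.1 q.2 ↔ p = q

lemma IsInducedPairing.adj (h : G.IsInducedPairing M) (hp : p ∈ M) : G.Adj p.1 p.2 :=
  (h p hp p hp).2 rfl

lemma IsInducedPairing.eq_of_fst_eq (h : G.IsInducedPairing M) (hp : p ∈ M) (hq : q ∈ M)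
    (he : p.1 = q.1) : p = q :=
  (h p hp q hq).1 (he ▸ h.adj hq)

lemma IsInducedPairing.eq_of_snd_eq (h : G.IsInducedPairing M) (hp : p ∈ M) (hq : q ∈ M)
    (he : p.2 = q.2) : p = q :=
  (h p hp q hq).1 (he ▸ h.adj hp)

lemma isInducedPairing_empty : G.IsInducedPairing ∅ := by
  simp [IsInducedPairing]

lemma IsInducedPairing.insert {x y : V} (h : G.IsInducedPairing M) (hxy : G.Adj x y)
    (hM : ∀ p ∈ M, ¬G.Adj x p.2 ∧ ¬G.Adj p.1 y) : G.IsInducedPairing (insert (x, y) M) := by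
  rintro p (rfl | hp) q (rfl | hq)
  · simpa using hxy
  · exact iff_of_false (hM q hq).1 (by rintro rfl; exact (hM _ hq).1 hxy)
  · exact iff_of_false (hM p hp).2 (by rintro rfl; exact (hM _ hp).2 hxy)
  · exact h p hp q hq

theorem exists_isInducedPairing_ncard_le [Finite V] (G : SimpleGraph V) (d : ℕ) (L Y : Set V)
    (hdeg : ∀ y ∈ Y, (G.neighborSet y ∩ L).ncard ≤ d) (hcov : ∀ x ∈ L, ∃ y ∈ Y, G.Adj x y) :
    ∃ M ⊆ L ×ˢ Y, G.IsInducedPairing M ∧ L.ncard ≤ d * M.ncard := by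
  induction L using WellFoundedLT.induction generalizing Y with | _ L ih =>
  rcases L.eq_empty_or_nonempty with rfl | hL
  · exact ⟨∅, Set.empty_subset _, isInducedPairing_empty, by simp⟩
  obtain ⟨x, hxL, hxmin⟩ :=
    Set.exists_min_image L (fun x => (G.neighborSet x ∩ Y).ncard) L.toFinite hL
  obtain ⟨y, hyY, hxy⟩ := hcov x hxL
  -- `x` has the fewest neighbours in `Y`, so a vertex whose `Y`-neighbours all lie in `N(x)` has
  -- exactly those, `y` among them.
  have hcov' : ∀ x' ∈ L \ G.neighborSet y, ∃ y' ∈ Y \ G.neighborSet x, G.Adj x' y' := by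
    rintro x' ⟨hx'L, hx'y⟩
    by_contra! hno
    have hsub : G.neighborSet x' ∩ Y ⊆ G.neighborSet x ∩ Y :=
      fun y' ⟨hx'y', hy'⟩ => ⟨by_contra fun h => hno y' ⟨hy', h⟩ hx'y', hy'⟩
    have hy : y ∈ G.neighborSet x' ∩ Y := by
      rw [Set.eq_of_subset_of_ncard_le hsub (hxmin x' hx'L)]
      exact ⟨hxy, hyY⟩
    exact hx'y hy.1.symm
  obtain ⟨M, hMsub, hM, hcard⟩ := ih (L \ G.neighborSet y)
    (Set.sdiff_ssubset_left_iff.2 ⟨x, hxL, hxy.symm⟩) (Y \ G.neighborSet x)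
    (fun y' hy' => (Set.ncard_le_ncard (Set.inter_subset_inter_right _ Set.sdiff_subset)).trans
      (hdeg y' hy'.1))
    hcov'
  have hfresh : ∀ p ∈ M, ¬G.Adj x p.2 ∧ ¬G.Adj p.1 y :=
    fun p hp => ⟨(hMsub hp).2.2, fun h => (hMsub hp).1.2 h.symm⟩
  refine ⟨insert (x, y) M, Set.insert_subset ⟨hxL, hyY⟩
    (hMsub.trans (Set.prod_mono Set.sdiff_subset Set.sdiff_subset)), hM.insert hxy hfresh, ?_⟩
  rw [Set.ncard_insert_of_notMem fun h => (hfresh _ h).1 hxy, mul_add_one]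
  have hL := Set.ncard_le_ncard_sdiff_add_ncard L (G.neighborSet y ∩ L)
  rw [Set.sdiff_inter_self_eq_sdiff] at hL
  have := hdeg y hyY
  omega

theorem IsInducedPairing.exists_isInducedMatching_cutGraph {A : Set V}
    (hM : G.IsInducedPairing M) (hMA : M ⊆ A ×ˢ Aᶜ) :
    ∃ N : (cutGraph G A).Subgraph, IsInducedMatching (cutGraph G A) N ∧
      N.edgeSet.ncard = M.ncard := by
  have hside : ∀ p ∈ M, p.1 ∈ A ∧ p.2 ∉ A := fun p hp => hMA hp
  set N := (⊤ : (cutGraph G A).Subgraph).induce (Prod.fst '' M ∪ Prod.snd '' M)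
  have hadj : ∀ u v, N.Adj u v ↔ (u, v) ∈ M ∨ (v, u) ∈ M := by
    intro u v
    constructor
    · rintro ⟨⟨p, hp, rfl⟩ | ⟨p, hp, rfl⟩, ⟨q, hq, rfl⟩ | ⟨q, hq, rfl⟩, hpq, hcut⟩
      · have := hside p hp; have := hside q hq; tauto
      · exact Or.inl ((hM p hp q hq).1 hpq ▸ hq)
      · exact Or.inr ((hM q hq p hp).1 hpq.symm ▸ hp)
      · have := hside p hp; have := hside q hq; tauto
    · rintro (h | h)
      · exact ⟨Or.inl ⟨_, h, rfl⟩, Or.inr ⟨_, h, rfl⟩, hM.adj h, Or.inl (hside _ h)⟩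
      · exact ⟨Or.inr ⟨_, h, rfl⟩, Or.inl ⟨_, h, rfl⟩, (hM.adj h).symm,
          Or.inr (hside _ h).symm⟩
  have hedge : N.edgeSet = (fun p : V × V => s(p.1, p.2)) '' M := by
    ext e
    induction e using Sym2.ind with | _ u v => aesop (add simp hadj)
  refine ⟨N, ⟨?_, fun u v hu hv huv => ⟨hu, hv, huv⟩⟩, ?_⟩
  · rintro v (⟨p, hp, rfl⟩ | ⟨p, hp, rfl⟩)
    · refine ⟨p.2, (hadj _ _).2 (Or.inl hp), fun w hw => ?_⟩
      rcases (hadj _ _).1 hw with h | h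
      · exact congrArg Prod.snd (hM.eq_of_fst_eq h hp rfl)
      · exact absurd (hside p hp).1 (hside _ h).2
    · refine ⟨p.1, (hadj _ _).2 (Or.inr hp), fun w hw => ?_⟩
      rcases (hadj _ _).1 hw with h | h
      · exact absurd (hside _ h).1 (hside p hp).2
      · exact congrArg Prod.fst (hM.eq_of_snd_eq h hp rfl)
  · rw [hedge, Set.InjOn.ncard_image]
    intro p hp q hq h
    rcases Sym2.mk_eq_mk_iff.1 h with h | h
    · exact h
    · subst h
      exact absurd (hside _ hp).1 (hside q hq).2

end SimpleGraph

theorem necSetoid_exists_rep_ncard_le [Finite V] {G : SimpleGraph V} {A : Set V} {d w : ℕ}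
    (hub : ∀ M : (cutGraph G A).Subgraph,
      IsInducedMatching (cutGraph G A) M → M.edgeSet.ncard ≤ w)
    (q : Quotient (necSetoid G A d)) :
    ∃ R : {S : Set V // S ⊆ A}, Quotient.mk _ R = q ∧ R.1.ncard ≤ d * w := by
  induction q using Quotient.ind with | _ B =>
  obtain ⟨R, hRB, hprofile, hwit⟩ := exists_irredundant_subset G A B.1 d
  obtain ⟨M, hMsub, hM, hcard⟩ := G.exists_isInducedPairing_ncard_le d R
    {v | v ∉ A ∧ (G.neighborSet v ∩ R).ncard ≤ d} (fun v hv => hv.2)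
    fun x hx => let ⟨v, hvA, hvx, hv⟩ := hwit x hx; ⟨v, ⟨hvA, hv⟩, hvx.symm⟩
  obtain ⟨N, hN, hNcard⟩ := hM.exists_isInducedMatching_cutGraph
    (hMsub.trans (Set.prod_mono (hRB.trans B.2) fun v hv => hv.1))
  refine ⟨⟨R, hRB.trans B.2⟩, Quotient.sound hprofile, ?_⟩
  calc R.ncard ≤ d * M.ncard := hcard
    _ ≤ d * w := Nat.mul_le_mul_left d (hNcard ▸ hub N hN)

end

theorem stmt19_general (G : SimpleGraph V) (A : Set V) (d w : ℕ)
    (hex : ∃ M : (cutGraph G A).Subgraph,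
      IsInducedMatching (cutGraph G A) M ∧ M.edgeSet.ncard = w)
    (hub : ∀ M : (cutGraph G A).Subgraph,
      IsInducedMatching (cutGraph G A) M → M.edgeSet.ncard ≤ w) :
    Nat.card (Quotient (necSetoid G A d)) ≤ (Fintype.card V) ^ (d * w) := by
  rcases eq_or_ne A Set.univ with rfl | hA
  · obtain ⟨M, -, rfl⟩ := hex
    have hM : M.edgeSet = ∅ :=
      Set.subset_empty_iff.1 (M.edgeSet_subset.trans (by rw [cutGraph_univ, edgeSet_bot]))
    have : Subsingleton (Quotient (necSetoid G Set.univ d)) :=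
      ⟨fun q q' => Quotient.inductionOn₂ q q' fun _ _ =>
        Quotient.sound fun v hv => absurd (Set.mem_univ v) hv⟩
    simpa [hM] using Finite.card_le_one_iff_subsingleton.2 this
  obtain ⟨a, ha⟩ := Set.nonempty_compl.2 hA
  choose R hRq hRcard using necSetoid_exists_rep_ncard_le (d := d) hub
  have hinj : Function.Injective fun q =>
      (⟨(R q).1, fun h => ha ((R q).2 h), hRcard q⟩ : {S : Set V // a ∉ S ∧ S.ncard ≤ d * w}) := by
    intro q q' h
    rw [← hRq q, ← hRq q', Subtype.ext (Subtype.mk.inj h)]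
  calc _ ≤ _ := Nat.card_le_card_of_injective _ hinj
    _ ≤ Nat.card V ^ (d * w) := card_sets_notMem_ncard_le_le_pow a (d * w)
    _ = _ := by rw [Nat.card_eq_fintype_card]

theorem stmt19 (G : SimpleGraph V) (A : Set V) (d w : ℕ) (hd : 0 < d)
    (hex : ∃ M : (cutGraph G A).Subgraph,
      IsInducedMatching (cutGraph G A) M ∧ M.edgeSet.ncard = w)
    (hub : ∀ M : (cutGraph G A).Subgraph,
      IsInducedMatching (cutGraph G A) M → M.edgeSet.ncard ≤ w) :
    Nat.card (Quotient (necSetoid G A d)) ≤ (Fintype.card V) ^ (d * w) :=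
  stmt19_general G A d w hex hub
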